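/- Fix a natural number k ≥ 1 and a real number ε with 0 ≤ ε < 1. For n ≥ k define E[N_n²] = ∑_{r=k}^{n} ∑_{e=0}^{∞} min((r+e)², n²) · C(r+e−1, e) ε^e (1−ε)^r · P_{M_n}(r), where P_{M_n}(r) = 2^{k−r} ∏_{l=0}^{n−r−1} (1 − 2^{l−(n−k)}). Then lim_{n→∞} E[N_n²] = ((k + c₀)² + (k + c₀)ε + c₀ + c₁)/(1 − ε)², where c₀ = ∑_{i=1}^{∞} 1/(2^i − 1) and c₁ = ∑_{i=1}^{∞} 1/(2^i − 1)². -/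

import Mathlib

/-!
Put `r = k + m`. Then `P_{M_n}(k + m) = 2^{-m} (1/2; 1/2)_{n-k} / (1/2; 1/2)_m` tends to
`p_m = 2^{-m} (1/2; 1/2)_∞ / (1/2; 1/2)_m`, while the truncated inner sum increases to the second
moment `(r² + εr) / (1 - ε)²` of `r + E_r`, so by dominated convergence the limit is
`∑ₘ ((k + m)² + ε (k + m)) p_m / (1 - ε)²`. The moments of `p` come from the functional equation
`F(z) - F(z/2) = z ∑ₘ (m + 1)ᵗ zᵐ / (1/2; 1/2)ₘ` of `F(z) = ∑ₘ mᵗ zᵐ / (1/2; 1/2)ₘ`: along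
`z = 2^{-N-1}` it telescopes, as `N → ∞`, to `∑ p_m = 1`, `∑ m p_m = c₀` and
`∑ m² p_m = c₀² + c₀ + c₁`, the last via `∑ₙ aₙ (2 ∑_{i ≥ n} aᵢ - aₙ) = (∑ aₙ)²`.
-/

open Filter

/-- The Erdős–Borwein constant `c₀ = ∑_{i=1}^{∞} 1/(2^i − 1)`. -/
noncomputable def c₀ : ℝ := ∑' i : ℕ, 1 / ((2 : ℝ) ^ (i + 1) - 1)

/-- The digital search tree constant `c₁ = ∑_{i=1}^{∞} 1/(2^i − 1)²`. -/
noncomputable def c₁ : ℝ := ∑' i : ℕ, 1 / ((2 : ℝ) ^ (i + 1) - 1) ^ 2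

/-- `P_{M_n}(r) = 2^{k−r} ∏_{l=0}^{n−r−1} (1 − 2^{l−(n−k)})`. -/
noncomputable def PM (k n r : ℕ) : ℝ :=
  (2 : ℝ) ^ ((k : ℤ) - (r : ℤ)) *
    ∏ l ∈ Finset.range (n - r), (1 - (2 : ℝ) ^ ((l : ℤ) - ((n : ℤ) - (k : ℤ))))

open Topology

theorem hasSum_of_sub_succ {f d : ℕ → ℝ} (hd : ∀ n, 0 ≤ d n) (hfd : ∀ n, f n - f (n + 1) = d n)
    (hf : Tendsto f atTop (𝓝 0)) : HasSum d (f 0) := by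
  rw [hasSum_iff_tendsto_nat_of_nonneg hd]
  have hpartial : ∀ n, ∑ i ∈ Finset.range n, d i = f 0 - f n := fun n => by
    rw [← Finset.sum_range_sub', Finset.sum_congr rfl fun i _ => hfd i]
  simpa [hpartial] using (tendsto_const_nhds (x := f 0)).sub hf

theorem hasSum_mul_two_mul_tsum_tail_sub {a : ℕ → ℝ} (ha : ∀ n, 0 ≤ a n) (hs : Summable a) :
    HasSum (fun n => a n * (2 * ∑' i, a (i + n) - a n)) ((∑' i, a i) ^ 2) := by
  set tail : ℕ → ℝ := fun n => ∑' i, a (i + n)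
  have htail : ∀ n, tail n = a n + tail (n + 1) := fun n => by
    simp only [tail, ((summable_nat_add_iff n).mpr hs).tsum_eq_zero_add, zero_add]
    congr 1
    exact tsum_congr fun i => by rw [add_right_comm, add_assoc]
  have htail_nonneg : ∀ n, 0 ≤ tail n := fun n => tsum_nonneg fun i => ha _
  have h := hasSum_of_sub_succ (f := fun n => tail n ^ 2) (d := fun n => a n * (2 * tail n - a n))
    (fun n => by rw [htail n]; nlinarith [ha n, htail_nonneg (n + 1)])
    (fun n => by rw [htail n]; ring)
    (by simpa using (tendsto_sum_nat_add a).pow 2)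
  simpa [tail] using h

theorem tsum_min_mul_le {ι : Type*} {x p : ι → ℝ} {s c : ℝ} (hc : 0 ≤ c) (hx : ∀ i, 0 ≤ x i)
    (hp : ∀ i, 0 ≤ p i) (hs : HasSum (fun i => x i * p i) s) : ∑' i, min (x i) c * p i ≤ s := by
  have hle : ∀ i, min (x i) c * p i ≤ x i * p i := fun i =>
    mul_le_mul_of_nonneg_right (min_le_left _ _) (hp i)
  have hnonneg : ∀ i, 0 ≤ min (x i) c * p i := fun i => mul_nonneg (le_min (hx i) hc) (hp i)
  exact hs.tsum_eq ▸ (hs.summable.of_nonneg_of_le hnonneg hle).tsum_le_tsum hle hs.summable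

theorem tendsto_tsum_min_mul {ι : Type*} {x p : ι → ℝ} {s : ℝ} (hx : ∀ i, 0 ≤ x i)
    (hp : ∀ i, 0 ≤ p i) (hs : HasSum (fun i => x i * p i) s) :
    Tendsto (fun c : ℝ => ∑' i, min (x i) c * p i) atTop (𝓝 s) := by
  rw [← hs.tsum_eq]
  refine tendsto_tsum_of_dominated_convergence hs.summable (fun i => ?_) ?_
  · refine tendsto_const_nhds.congr' ?_
    filter_upwards [eventually_ge_atTop (x i)] with c hc
    rw [min_eq_left hc]
  · filter_upwards [eventually_ge_atTop 0] with c hc i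
    rw [Real.norm_of_nonneg (mul_nonneg (le_min (hx i) hc) (hp i))]
    exact mul_le_mul_of_nonneg_right (min_le_left _ _) (hp i)

namespace RoundLength

/-- The `q`-Pochhammer symbol `(1/2; 1/2)_N = ∏_{j=1}^{N} (1 - 2^{-j})`. -/
noncomputable def qPoch (N : ℕ) : ℝ := ∏ j ∈ Finset.range N, (1 - (2⁻¹ : ℝ) ^ (j + 1))

@[simp] lemma qPoch_zero : qPoch 0 = 1 := Finset.prod_range_zero _

lemma qPoch_succ (N : ℕ) : qPoch (N + 1) = qPoch N * (1 - (2⁻¹ : ℝ) ^ (N + 1)) :=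
  Finset.prod_range_succ _ _

lemma half_pow_succ_le_half (N : ℕ) : (2⁻¹ : ℝ) ^ (N + 1) ≤ 2⁻¹ :=
  pow_le_of_le_one (by norm_num) (by norm_num) N.succ_ne_zero

lemma qPoch_pos (N : ℕ) : 0 < qPoch N :=
  Finset.prod_pos fun j _ => by linarith [half_pow_succ_le_half j]

lemma qPoch_le_one (N : ℕ) : qPoch N ≤ 1 :=
  Finset.prod_le_one (fun j _ => by linarith [half_pow_succ_le_half j])
    (fun j _ => by linarith [pow_pos (by norm_num : (0 : ℝ) < 2⁻¹) (j + 1)])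

lemma qPoch_antitone : Antitone qPoch :=
  antitone_nat_of_succ_le fun N => by
    rw [qPoch_succ]
    nlinarith [qPoch_pos N, pow_pos (by norm_num : (0 : ℝ) < 2⁻¹) (N + 1)]

lemma quarter_add_le_qPoch_succ (N : ℕ) : 4⁻¹ + (2⁻¹ : ℝ) ^ (N + 2) ≤ qPoch (N + 1) := by
  induction N with
  | zero => norm_num [qPoch_succ]
  | succ N ih =>
    rw [qPoch_succ]
    have hpos : (0 : ℝ) < 2⁻¹ ^ (N + 2) := by positivity
    have hsmall : (2⁻¹ : ℝ) ^ (N + 2) ≤ 4⁻¹ :=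
      calc (2⁻¹ : ℝ) ^ (N + 2) ≤ 2⁻¹ ^ 2 :=
            pow_le_pow_of_le_one (by norm_num) (by norm_num) (by omega)
        _ = 4⁻¹ := by norm_num
    rw [pow_succ _ (N + 2)]
    nlinarith

lemma quarter_le_qPoch (N : ℕ) : (4⁻¹ : ℝ) ≤ qPoch N :=
  calc (4⁻¹ : ℝ) ≤ 4⁻¹ + 2⁻¹ ^ (N + 2) := by simp
    _ ≤ qPoch (N + 1) := quarter_add_le_qPoch_succ N
    _ ≤ qPoch N := qPoch_antitone N.le_succ

noncomputable def qPochInf : ℝ := ⨅ N, qPoch N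

lemma qPochInf_pos : 0 < qPochInf :=
  lt_of_lt_of_le (by norm_num) (le_ciInf quarter_le_qPoch)

lemma tendsto_qPoch : Tendsto qPoch atTop (𝓝 qPochInf) :=
  tendsto_atTop_ciInf qPoch_antitone ⟨0, by rintro _ ⟨N, rfl⟩; exact (qPoch_pos N).le⟩

lemma inv_qPoch_le (N : ℕ) : (qPoch N)⁻¹ ≤ 4 := by
  rw [inv_le_comm₀ (qPoch_pos N) (by norm_num)]
  exact quarter_le_qPoch N

lemma one_sub_half_pow_succ_ne_zero (N : ℕ) : 1 - (2⁻¹ : ℝ) ^ (N + 1) ≠ 0 := by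
  linarith [half_pow_succ_le_half N]

lemma one_sub_div_qPoch_succ (m : ℕ) :
    (1 - (2⁻¹ : ℝ) ^ (m + 1)) / qPoch (m + 1) = (qPoch m)⁻¹ := by
  rw [qPoch_succ, div_mul_cancel_right₀ (one_sub_half_pow_succ_ne_zero m)]

/-- By Euler's identity `genFun 0 z = 1 / (z; 1/2)_∞`. -/
noncomputable def genFun (t : ℕ) (z : ℝ) : ℝ := ∑' m : ℕ, (m : ℝ) ^ t * z ^ m / qPoch m

lemma norm_div_qPoch_le (x : ℝ) (m : ℕ) : ‖x / qPoch m‖ ≤ 4 * ‖x‖ := by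
  rw [norm_div, Real.norm_of_nonneg (qPoch_pos m).le, div_eq_mul_inv, mul_comm 4]
  exact mul_le_mul_of_nonneg_left (inv_qPoch_le m) (norm_nonneg _)

lemma hasSum_genFun (t : ℕ) {z : ℝ} (hz : ‖z‖ < 1) :
    HasSum (fun m : ℕ => (m : ℝ) ^ t * z ^ m / qPoch m) (genFun t z) :=
  (((summable_pow_mul_geometric_of_norm_lt_one t hz).norm.mul_left 4).of_norm_bounded
    (fun m => norm_div_qPoch_le _ m)).hasSum

lemma tendsto_genFun_zero (t : ℕ) : Tendsto (genFun t) (𝓝 0) (𝓝 (0 ^ t)) := by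
  have hhalf : ‖(2⁻¹ : ℝ)‖ < 1 := by norm_num
  have hlim : ∑' m : ℕ, (m : ℝ) ^ t * 0 ^ m / qPoch m = 0 ^ t := by
    rw [tsum_eq_single 0 fun m hm => by simp [hm]]
    simp
  rw [← hlim]
  refine tendsto_tsum_of_dominated_convergence
    ((summable_pow_mul_geometric_of_norm_lt_one t hhalf).norm.mul_left 4)
    (fun m => ((tendsto_id.pow m).const_mul _).div_const _) ?_
  filter_upwards [Metric.closedBall_mem_nhds (0 : ℝ) (by norm_num : (0 : ℝ) < 2⁻¹)] with z hz m
  refine (norm_div_qPoch_le _ m).trans (mul_le_mul_of_nonneg_left ?_ (by norm_num))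
  have hz' : ‖z‖ ≤ ‖(2⁻¹ : ℝ)‖ := by simpa using hz
  simp only [norm_mul, norm_pow]
  gcongr

lemma genFun_sub_genFun_half {t : ℕ} {z S : ℝ} (hz : ‖z‖ < 1)
    (hS : HasSum (fun m : ℕ => ((m : ℝ) + 1) ^ t * z ^ m / qPoch m) S) :
    genFun t z - genFun t (z / 2) = z * S := by
  have hz2 : ‖z / 2‖ < 1 := by rw [norm_div, Real.norm_two]; linarith [norm_nonneg z]
  have hdiff := (hasSum_genFun t hz).sub (hasSum_genFun t hz2)
  rw [← hasSum_nat_add_iff' 1, Finset.sum_range_one] at hdiff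
  simp only [pow_zero, sub_self, sub_zero] at hdiff
  refine hdiff.unique ((hS.mul_left z).congr_fun fun m => ?_)
  rw [div_eq_mul_inv _ (qPoch m), ← one_sub_div_qPoch_succ]
  push_cast
  ring

lemma norm_half_pow_succ_lt_one (N : ℕ) : ‖(2⁻¹ : ℝ) ^ (N + 1)‖ < 1 := by
  rw [norm_pow, norm_inv, Real.norm_two]
  exact pow_lt_one₀ (by norm_num) (by norm_num) N.succ_ne_zero

noncomputable def c₀Term (i : ℕ) : ℝ := 1 / ((2 : ℝ) ^ (i + 1) - 1)

lemma c₀Term_eq (N : ℕ) : c₀Term N = 2⁻¹ ^ (N + 1) / (1 - (2⁻¹ : ℝ) ^ (N + 1)) := by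
  have h := one_sub_half_pow_succ_ne_zero N
  rw [c₀Term, inv_pow] at *
  field_simp

lemma c₀Term_nonneg (N : ℕ) : 0 ≤ c₀Term N := by
  rw [c₀Term_eq]
  exact div_nonneg (by positivity) (by linarith [half_pow_succ_le_half N])

lemma c₀Term_le (N : ℕ) : c₀Term N ≤ 2⁻¹ ^ N := by
  rw [c₀Term_eq, div_le_iff₀ (by linarith [half_pow_succ_le_half N]), pow_succ]
  nlinarith [half_pow_succ_le_half N, pow_pos (by norm_num : (0 : ℝ) < 2⁻¹) N, pow_succ (2⁻¹ : ℝ) N]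

lemma summable_c₀Term : Summable c₀Term :=
  (summable_geometric_of_lt_one (by norm_num) (by norm_num)).of_nonneg_of_le c₀Term_nonneg c₀Term_le

lemma hasSum_c₀Term : HasSum c₀Term c₀ := summable_c₀Term.hasSum

lemma hasSum_c₀Term_sq : HasSum (fun i => c₀Term i ^ 2) c₁ := by
  have hle : ∀ i, c₀Term i ^ 2 ≤ c₀Term i := fun i => by
    nlinarith [c₀Term_nonneg i, c₀Term_le i, pow_le_one₀ (by norm_num : (0 : ℝ) ≤ 2⁻¹)
      (by norm_num : (2⁻¹ : ℝ) ≤ 1) (n := i)]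
  convert (summable_c₀Term.of_nonneg_of_le (fun i => sq_nonneg (c₀Term i)) hle).hasSum using 1
  exact tsum_congr fun i => by rw [c₀Term, div_pow, one_pow]

/-- `qPochInf * tailMoment t N` is the `t`-th moment of `∑_{j > N} Y_j` for independent `Y_j` with
`P(Y_j = y) = (1 - 2^{-j}) 2^{-jy}`, whose mean `1 / (2^j - 1)` is `c₀Term (j - 1)`. -/
noncomputable def tailMoment (t N : ℕ) : ℝ := genFun t (2⁻¹ ^ (N + 1)) / qPoch N

lemma tailMoment_sub_succ {t N : ℕ} {D : ℝ}
    (hD : HasSum (fun m : ℕ => ((m : ℝ) + 1) ^ t * ((2⁻¹ : ℝ) ^ (N + 1)) ^ m / qPoch m)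
      (genFun t (2⁻¹ ^ (N + 1)) + D)) :
    tailMoment t N - tailMoment t (N + 1) = c₀Term N * (D / qPoch N) := by
  have hfe := genFun_sub_genFun_half (norm_half_pow_succ_lt_one N) hD
  rw [show (2⁻¹ : ℝ) ^ (N + 1) / 2 = 2⁻¹ ^ (N + 1 + 1) by ring] at hfe
  have hQ := (qPoch_pos N).ne'
  have h1 := one_sub_half_pow_succ_ne_zero N
  rw [tailMoment, tailMoment, qPoch_succ, c₀Term_eq]
  generalize genFun t (2⁻¹ ^ (N + 1)) = F at hfe ⊢
  generalize genFun t (2⁻¹ ^ (N + 1 + 1)) = G at hfe ⊢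
  generalize (2⁻¹ : ℝ) ^ (N + 1) = x at hfe h1 ⊢
  field_simp
  linear_combination hfe

lemma tailMoment_zero_succ (N : ℕ) : tailMoment 0 (N + 1) = tailMoment 0 N := by
  have h := tailMoment_sub_succ (t := 0) (N := N) (D := 0)
    (by simpa using hasSum_genFun 0 (norm_half_pow_succ_lt_one N))
  rw [zero_div, mul_zero, sub_eq_zero] at h
  exact h.symm

lemma tailMoment_one_sub_succ (N : ℕ) :
    tailMoment 1 N - tailMoment 1 (N + 1) = c₀Term N * tailMoment 0 N := by
  have hx := norm_half_pow_succ_lt_one N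
  refine tailMoment_sub_succ ?_
  refine ((hasSum_genFun 1 hx).add (hasSum_genFun 0 hx)).congr_fun fun m => ?_
  ring

lemma tailMoment_two_sub_succ (N : ℕ) :
    tailMoment 2 N - tailMoment 2 (N + 1) = c₀Term N * (2 * tailMoment 1 N + tailMoment 0 N) := by
  have hx := norm_half_pow_succ_lt_one N
  have hD : HasSum (fun m : ℕ => ((m : ℝ) + 1) ^ 2 * ((2⁻¹ : ℝ) ^ (N + 1)) ^ m / qPoch m)
      (genFun 2 (2⁻¹ ^ (N + 1)) + (2 * genFun 1 (2⁻¹ ^ (N + 1)) + genFun 0 (2⁻¹ ^ (N + 1)))) :=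
    ((hasSum_genFun 2 hx).add (((hasSum_genFun 1 hx).mul_left 2).add
      (hasSum_genFun 0 hx))).congr_fun fun m => by ring
  rw [tailMoment_sub_succ hD, tailMoment, tailMoment]
  ring

lemma tendsto_tailMoment (t : ℕ) : Tendsto (tailMoment t) atTop (𝓝 (0 ^ t / qPochInf)) := by
  have hx : Tendsto (fun N : ℕ => (2⁻¹ : ℝ) ^ (N + 1)) atTop (𝓝 0) :=
    (tendsto_pow_atTop_nhds_zero_of_lt_one (by norm_num) (by norm_num)).comp
      (tendsto_add_atTop_nat 1)
  exact ((tendsto_genFun_zero t).comp hx).div tendsto_qPoch qPochInf_pos.ne'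

lemma tailMoment_zero_eq (N : ℕ) : tailMoment 0 N = qPochInf⁻¹ := by
  have hconst : ∀ N, tailMoment 0 N = tailMoment 0 0 := fun N => by
    induction N with
    | zero => rfl
    | succ N ih => rw [tailMoment_zero_succ, ih]
  have h := tendsto_nhds_unique (tendsto_const_nhds.congr fun N => (hconst N).symm)
    (tendsto_tailMoment 0)
  rw [hconst, h, pow_zero, one_div]

lemma tailMoment_one_eq (N : ℕ) : tailMoment 1 N = (∑' i, c₀Term (i + N)) / qPochInf := by
  have h := hasSum_of_sub_succ (f := fun i => tailMoment 1 (i + N))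
    (d := fun i => c₀Term (i + N) / qPochInf)
    (fun i => div_nonneg (c₀Term_nonneg _) qPochInf_pos.le)
    (fun i => by
      rw [show i + 1 + N = i + N + 1 by ring, tailMoment_one_sub_succ, tailMoment_zero_eq,
        div_eq_mul_inv])
    (by simpa [Function.comp_def] using (tendsto_tailMoment 1).comp (tendsto_add_atTop_nat N))
  simp only [zero_add] at h
  rw [← tsum_div_const, h.tsum_eq]

lemma tailMoment_two_zero : tailMoment 2 0 = (c₀ ^ 2 + c₀ + c₁) / qPochInf := by
  have h := hasSum_of_sub_succ (f := tailMoment 2)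
    (d := fun N => c₀Term N * (2 * tailMoment 1 N + tailMoment 0 N))
    (fun N => by
      rw [tailMoment_one_eq, tailMoment_zero_eq]
      have : 0 ≤ ∑' i, c₀Term (i + N) := tsum_nonneg fun i => c₀Term_nonneg (i + N)
      have := qPochInf_pos
      have := c₀Term_nonneg N
      positivity)
    tailMoment_two_sub_succ
    (by simpa using tendsto_tailMoment 2)
  refine h.unique ?_
  rw [add_right_comm]
  have hsq := hasSum_mul_two_mul_tsum_tail_sub c₀Term_nonneg summable_c₀Term
  rw [hasSum_c₀Term.tsum_eq] at hsq
  refine (((hsq.add hasSum_c₀Term_sq).add hasSum_c₀Term).div_const qPochInf).congr_fun fun N => ?_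
  rw [tailMoment_one_eq, tailMoment_zero_eq]
  field_simp
  ring

/-- The limiting law of `M_n - k` as `n → ∞`. -/
noncomputable def limitLaw (m : ℕ) : ℝ := 2⁻¹ ^ m * qPochInf / qPoch m

lemma limitLaw_nonneg (m : ℕ) : 0 ≤ limitLaw m :=
  div_nonneg (mul_nonneg (by positivity) qPochInf_pos.le) (qPoch_pos m).le

lemma hasSum_pow_mul_limitLaw (t : ℕ) :
    HasSum (fun m : ℕ => (m : ℝ) ^ t * limitLaw m) (qPochInf * tailMoment t 0) := by
  rw [tailMoment, qPoch_zero, div_one]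
  refine ((hasSum_genFun t (norm_half_pow_succ_lt_one 0)).mul_left qPochInf).congr_fun fun m => ?_
  rw [limitLaw, zero_add, pow_one]
  ring

lemma hasSum_limitLaw : HasSum limitLaw 1 := by
  simpa [tailMoment_zero_eq, qPochInf_pos.ne'] using hasSum_pow_mul_limitLaw 0

lemma hasSum_mul_limitLaw : HasSum (fun m : ℕ => (m : ℝ) * limitLaw m) c₀ := by
  simpa [tailMoment_one_eq, hasSum_c₀Term.tsum_eq, mul_div_cancel₀ _ qPochInf_pos.ne']
    using hasSum_pow_mul_limitLaw 1

lemma hasSum_sq_mul_limitLaw :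
    HasSum (fun m : ℕ => (m : ℝ) ^ 2 * limitLaw m) (c₀ ^ 2 + c₀ + c₁) := by
  simpa [tailMoment_two_zero, mul_div_cancel₀ _ qPochInf_pos.ne'] using hasSum_pow_mul_limitLaw 2

lemma PM_add_eq {k m n : ℕ} (h : k + m ≤ n) :
    PM k n (k + m) = 2⁻¹ ^ m * qPoch (n - k) / qPoch m := by
  obtain ⟨N, rfl⟩ : ∃ N, n = k + m + N := ⟨n - (k + m), by omega⟩
  have hsplit : qPoch (k + m + N - k) =
      qPoch m * ∏ j ∈ Finset.range N, (1 - (2⁻¹ : ℝ) ^ (m + j + 1)) := by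
    rw [show k + m + N - k = m + N by omega, qPoch, Finset.prod_range_add]
    rfl
  have hreflect : ∏ l ∈ Finset.range (k + m + N - (k + m)),
      (1 - (2 : ℝ) ^ ((l : ℤ) - (((k + m + N : ℕ) : ℤ) - (k : ℤ)))) =
      ∏ j ∈ Finset.range N, (1 - (2⁻¹ : ℝ) ^ (m + j + 1)) := by
    rw [show k + m + N - (k + m) = N by omega, ← Finset.prod_range_reflect]
    refine Finset.prod_congr rfl fun l hl => ?_
    have hl := Finset.mem_range.mp hl
    rw [show ((N - 1 - l : ℕ) : ℤ) - (((k + m + N : ℕ) : ℤ) - k) = -((m + l + 1 : ℕ) : ℤ) by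
      omega, zpow_neg, zpow_natCast, inv_pow]
  have hfirst : (2 : ℝ) ^ ((k : ℤ) - ((k + m : ℕ) : ℤ)) = 2⁻¹ ^ m := by
    rw [show (k : ℤ) - ((k + m : ℕ) : ℤ) = -(m : ℤ) by push_cast; ring, zpow_neg, zpow_natCast,
      inv_pow]
  rw [PM, hfirst, hreflect, hsplit, mul_div_assoc, mul_div_cancel_left₀ _ (qPoch_pos m).ne']

lemma PM_add_nonneg {k m n : ℕ} (h : k + m ≤ n) : 0 ≤ PM k n (k + m) := by
  rw [PM_add_eq h]
  have := qPoch_pos (n - k)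
  have := qPoch_pos m
  positivity

lemma PM_add_le {k m n : ℕ} (h : k + m ≤ n) : PM k n (k + m) ≤ limitLaw m / qPochInf := by
  have hlaw : limitLaw m / qPochInf = 2⁻¹ ^ m / qPoch m := by
    rw [limitLaw, mul_div_right_comm, mul_div_cancel_right₀ _ qPochInf_pos.ne']
  rw [PM_add_eq h, hlaw, mul_div_right_comm]
  exact mul_le_of_le_one_right (div_nonneg (by positivity) (qPoch_pos m).le)
    (qPoch_le_one _)

lemma tendsto_PM_add (k m : ℕ) : Tendsto (fun n => PM k n (k + m)) atTop (𝓝 (limitLaw m)) := by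
  refine (((tendsto_qPoch.comp (tendsto_sub_atTop_nat k)).const_mul _).div_const _).congr' ?_
  filter_upwards [eventually_ge_atTop (k + m)] with n hn
  exact (PM_add_eq hn).symm

theorem tendsto_sum_Icc_mul_PM {k : ℕ} {T : ℕ → ℕ → ℝ} {B : ℕ → ℝ} {s : ℝ}
    (hT_nonneg : ∀ n r, 0 ≤ T n r) (hT_le : ∀ n r, T n r ≤ B r)
    (hT : ∀ r, Tendsto (fun n => T n r) atTop (𝓝 (B r)))
    (hs : HasSum (fun m => B (k + m) * limitLaw m) s) :
    Tendsto (fun n => ∑ r ∈ Finset.Icc k n, T n r * PM k n r) atTop (𝓝 s) := by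
  set f : ℕ → ℕ → ℝ := fun n m => T n (k + m) * PM k n (k + m)
  have hsum : ∀ n, ∑ r ∈ Finset.Icc k n, T n r * PM k n r =
      ∑' m, (Finset.range (n + 1 - k) : Set ℕ).indicator (f n) m := fun n => by
    rw [← sum_eq_tsum_indicator, ← Finset.Ico_add_one_right_eq_Icc, Finset.sum_Ico_eq_sum_range]
  simp_rw [hsum, ← hs.tsum_eq]
  refine tendsto_tsum_of_dominated_convergence
    (bound := fun m => B (k + m) * (limitLaw m / qPochInf))
    ((hs.div_const qPochInf).summable.congr fun m => mul_div_assoc _ _ _) (fun m => ?_)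
    (Eventually.of_forall fun n m => ?_)
  · refine ((hT (k + m)).mul (tendsto_PM_add k m)).congr' ?_
    filter_upwards [eventually_ge_atTop (k + m)] with n hn
    rw [Set.indicator_of_mem (by simp; omega)]
  · have hlaw : 0 ≤ limitLaw m / qPochInf :=
      div_nonneg (limitLaw_nonneg m) qPochInf_pos.le
    by_cases hm : k + m ≤ n
    · rw [Set.indicator_of_mem (by simp; omega), Real.norm_of_nonneg
        (mul_nonneg (hT_nonneg n _) (PM_add_nonneg hm))]
      exact mul_le_mul (hT_le n _) (PM_add_le hm) (PM_add_nonneg hm)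
        ((hT_nonneg n _).trans (hT_le n _))
    · rw [Set.indicator_of_notMem (by simp; omega), norm_zero]
      exact mul_nonneg ((hT_nonneg n _).trans (hT_le n _)) hlaw

/-- `P_{E_r}(e)`; truncated subtraction makes `negBinom ε 0` the point mass at `0`, as it should. -/
noncomputable def negBinom (ε : ℝ) (r e : ℕ) : ℝ := (r + e - 1).choose e * ε ^ e * (1 - ε) ^ r

lemma negBinom_nonneg {ε : ℝ} (h₀ : 0 ≤ ε) (h₁ : ε ≤ 1) (r e : ℕ) : 0 ≤ negBinom ε r e := by
  have : 0 ≤ 1 - ε := by linarith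
  unfold negBinom
  positivity

lemma add_mul_choose_sub_one (r e : ℕ) : (r + e) * (r + e - 1).choose e = r * (r + e).choose e := by
  rcases r with _ | r
  · rcases e with _ | e <;> simp
  · have h := Nat.choose_mul_succ_eq (r + e) e
    rw [show r + e + 1 - e = r + 1 by omega, show r + e + 1 = r + 1 + e by omega] at h
    rw [show r + 1 + e - 1 = r + e by omega, mul_comm, h, mul_comm]

lemma sq_mul_choose_sub_one (r e : ℕ) :
    ((r : ℝ) + e) ^ 2 * (r + e - 1).choose e =
      r * (r + 1) * (e + (r + 1)).choose (r + 1) - r * (e + r).choose r := by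
  have h₁ : ((r : ℝ) + e) * (r + e - 1).choose e = r * (r + e).choose e := by
    exact_mod_cast add_mul_choose_sub_one r e
  have h₂ : ((r : ℝ) + 1 + e) * (r + e).choose e = (r + 1) * (r + 1 + e).choose e := by
    have h := add_mul_choose_sub_one (r + 1) e
    rw [show r + 1 + e - 1 = r + e by omega] at h
    exact_mod_cast h
  rw [add_comm e (r + 1), add_comm e r, Nat.choose_symm_add, Nat.choose_symm_add]
  linear_combination ((r : ℝ) + e) * h₁ + (r : ℝ) * h₂

lemma hasSum_sq_mul_negBinom {ε : ℝ} (hε : ‖ε‖ < 1) (r : ℕ) :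
    HasSum (fun e : ℕ => ((r : ℝ) + e) ^ 2 * negBinom ε r e)
      (((r : ℝ) ^ 2 + ε * r) / (1 - ε) ^ 2) := by
  have hne : 1 - ε ≠ 0 := sub_ne_zero.mpr ((le_abs_self ε).trans_lt hε).ne'
  have h := (((hasSum_choose_mul_geometric_of_norm_lt_one (r + 1) hε).mul_left
    ((r : ℝ) * (r + 1))).sub ((hasSum_choose_mul_geometric_of_norm_lt_one r hε).mul_left
    (r : ℝ))).mul_right ((1 - ε) ^ r)
  rw [show ((r : ℝ) ^ 2 + ε * r) / (1 - ε) ^ 2 =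
      (r * (r + 1) * (1 / (1 - ε) ^ (r + 1 + 1)) - r * (1 / (1 - ε) ^ (r + 1))) * (1 - ε) ^ r by
    field_simp
    ring]
  refine h.congr_fun fun e => ?_
  rw [negBinom, ← mul_assoc, ← mul_assoc, sq_mul_choose_sub_one]
  ring

lemma hasSum_quadratic_mul_limitLaw (k : ℕ) (ε : ℝ) :
    HasSum (fun m : ℕ => (((k + m : ℕ) : ℝ) ^ 2 + ε * (k + m : ℕ)) / (1 - ε) ^ 2 * limitLaw m)
      ((((k : ℝ) + c₀) ^ 2 + ((k : ℝ) + c₀) * ε + c₀ + c₁) / (1 - ε) ^ 2) := by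
  have h := ((hasSum_limitLaw.mul_left ((k : ℝ) ^ 2 + ε * k)).add
    ((hasSum_mul_limitLaw.mul_left (2 * (k : ℝ) + ε)).add hasSum_sq_mul_limitLaw)).div_const
    ((1 - ε) ^ 2)
  rw [show (((k : ℝ) + c₀) ^ 2 + ((k : ℝ) + c₀) * ε + c₀ + c₁) =
      ((k : ℝ) ^ 2 + ε * k) * 1 + ((2 * (k : ℝ) + ε) * c₀ + (c₀ ^ 2 + c₀ + c₁)) by ring]
  refine h.congr_fun fun m => ?_
  push_cast
  ring

end RoundLength

open RoundLength in
theorem second_moment_round_length_limit_general (k : ℕ) (ε : ℝ)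
    (h₀ : 0 ≤ ε) (h₁ : ε < 1) :
    Tendsto
      (fun n : ℕ => ∑ r ∈ Finset.Icc k n, ∑' e : ℕ,
        (min ((r + e) ^ 2) (n ^ 2) : ℝ) * (Nat.choose (r + e - 1) e : ℝ) * ε ^ e *
          (1 - ε) ^ r * PM k n r)
      atTop
      (nhds ((((k : ℝ) + c₀) ^ 2 + ((k : ℝ) + c₀) * ε + c₀ + c₁) / (1 - ε) ^ 2)) := by
  have hsq := hasSum_sq_mul_negBinom (ε := ε) (by rwa [Real.norm_of_nonneg h₀])
  have hp := negBinom_nonneg h₀ h₁.le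
  have hn : Tendsto (fun n : ℕ => (n : ℝ) ^ 2) atTop atTop :=
    (tendsto_pow_atTop two_ne_zero).comp tendsto_natCast_atTop_atTop
  refine (tendsto_sum_Icc_mul_PM (B := fun r : ℕ => ((r : ℝ) ^ 2 + ε * r) / (1 - ε) ^ 2)
    (T := fun n r => ∑' e : ℕ, min (((r : ℝ) + e) ^ 2) ((n : ℝ) ^ 2) * negBinom ε r e)
    (fun n r => tsum_nonneg fun e => mul_nonneg (le_min (sq_nonneg _) (sq_nonneg _)) (hp r e))
    (fun n r => tsum_min_mul_le (sq_nonneg _) (fun e => sq_nonneg _) (hp r) (hsq r))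
    (fun r => (tendsto_tsum_min_mul (fun e => sq_nonneg _) (hp r) (hsq r)).comp hn)
    (hasSum_quadratic_mul_limitLaw k ε)).congr fun n => Finset.sum_congr rfl fun r _ => ?_
  rw [← tsum_mul_right]
  exact tsum_congr fun e => by rw [negBinom]; ring

/-- `lim_{n→∞} E[N_n²] = ((k + c₀)² + (k + c₀)ε + c₀ + c₁)/(1 − ε)²`, where
`E[N_n²] = ∑_{r=k}^{n} ∑_{e=0}^{∞} min((r+e)², n²) · C(r+e−1, e) ε^e (1−ε)^r · P_{M_n}(r)`
is the second moment of the length of a transmission round. -/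
theorem second_moment_round_length_limit (k : ℕ) (hk : 1 ≤ k) (ε : ℝ)
    (h₀ : 0 ≤ ε) (h₁ : ε < 1) :
    Tendsto
      (fun n : ℕ => ∑ r ∈ Finset.Icc k n, ∑' e : ℕ,
        (min ((r + e) ^ 2) (n ^ 2) : ℝ) * (Nat.choose (r + e - 1) e : ℝ) * ε ^ e *
          (1 - ε) ^ r * PM k n r)
      atTop
      (nhds ((((k : ℝ) + c₀) ^ 2 + ((k : ℝ) + c₀) * ε + c₀ + c₁) / (1 - ε) ^ 2)) :=
  second_moment_round_length_limit_general k ε h₀ h₁
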